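/- arXiv:2510.22741 — 2 statements merged into one kernel-verified Lean document; each statement's English description precedes it below -/
import Mathlib

section
/- Let m ≥ 0 be an integer, let q > 2 be a real number, and set α = (q−2)/(2m+q) ∈ (0,1). Define u : ℝ → ℝ by u(x) = sign(x)·|x|^α. Then for every x ≠ 0, u is twice differentiable at x with u'(x) = α|x|^{α−1} > 0, and u satisfies the pointwise identity u''(x) = (α−1)·α^{1−q} · u(x)^{2m+1} · (u'(x))^q; equivalently, arctan(u''(x)) = −arctan( (1−α)·α^{1−q} · u(x)^{2m+1} · (u'(x))^q ). -/
/-!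
Away from the origin `sign` is locally constant, so `u = sign · |·|^α` and `u' = α |·|^(α-1)` are
differentiated with the power rule, giving `u'' = α (α - 1) sign x |x|^(α-2)`. Since
`sign x ^ (2m+1) = sign x`, the right-hand side of the identity is
`(α - 1) α^(1-q) α^q sign x |x|^(α(2m+1) + (α-1)q)`, and the choice `α = (q-2)/(2m+q)` is exactly
the exponent relation `α(2m+1) + (α-1)q = α - 2`.
-/

open Real Filter Topology

namespace Real

theorem sign_eventuallyEq {x : ℝ} (hx : x ≠ 0) : sign =ᶠ[𝓝 x] fun _ ↦ sign x := by
  rcases hx.lt_or_gt with hneg | hpos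
  · filter_upwards [Iio_mem_nhds hneg] with y hy
    rw [sign_of_neg hy, sign_of_neg hneg]
  · filter_upwards [Ioi_mem_nhds hpos] with y hy
    rw [sign_of_pos hy, sign_of_pos hpos]

theorem hasDerivAt_sign {x : ℝ} (hx : x ≠ 0) : HasDerivAt sign 0 x :=
  (hasDerivAt_const x (sign x)).congr_of_eventuallyEq (sign_eventuallyEq hx)

theorem sign_mul_self_of_ne_zero {x : ℝ} (hx : x ≠ 0) : sign x * sign x = 1 := by
  rcases sign_apply_eq_of_ne_zero x hx with h | h <;> simp [h]

theorem sign_pow_of_odd {n : ℕ} (hn : Odd n) (x : ℝ) : sign x ^ n = sign x := by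
  rcases sign_apply_eq x with h | h | h <;> simp [h, hn.neg_one_pow, hn.pos.ne']

theorem hasDerivAt_abs_rpow_of_ne_zero (r : ℝ) {x : ℝ} (hx : x ≠ 0) :
    HasDerivAt (fun y ↦ |y| ^ r) (r * |x| ^ (r - 1) * sign x) x := by
  have habs : HasDerivAt (|·|) (sign x) x := by
    rcases hx.lt_or_gt with hneg | hpos
    · simpa [sign_of_neg hneg] using hasDerivAt_abs_neg hneg
    · simpa [sign_of_pos hpos] using hasDerivAt_abs_pos hpos
  exact (habs.rpow_const (Or.inl (abs_ne_zero.mpr hx))).congr_deriv (by ring)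

theorem hasDerivAt_sign_mul_abs_rpow (r : ℝ) {x : ℝ} (hx : x ≠ 0) :
    HasDerivAt (fun y ↦ sign y * |y| ^ r) (r * |x| ^ (r - 1)) x := by
  refine ((hasDerivAt_sign hx).fun_mul (hasDerivAt_abs_rpow_of_ne_zero r hx)).congr_deriv ?_
  linear_combination r * |x| ^ (r - 1) * sign_mul_self_of_ne_zero hx

end Real

theorem singular_exponent_mem_Ioo {k q : ℝ} (hk : 0 ≤ k) (hq : 2 < q) :
    (q - 2) / (k + q) ∈ Set.Ioo (0 : ℝ) 1 := by
  have hden : 0 < k + q := by linarith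
  exact ⟨div_pos (by linarith) hden, (div_lt_one hden).mpr (by linarith)⟩

theorem singular_exponent_relation {k q : ℝ} (hden : k + q ≠ 0) :
    (q - 2) / (k + q) * (k + 1) + ((q - 2) / (k + q) - 1) * q = (q - 2) / (k + q) - 2 := by
  field_simp
  ring

/-- `u'' = a (a-1) s t^(a-2)` expressed through `u = s t^a` and `u' = a t^(a-1)`. -/
theorem mul_rpow_sub_two_eq {a q s t : ℝ} {n : ℕ} (ha : 0 < a) (ht : 0 < t) (hs : s ^ n = s)
    (hexp : a * n + (a - 1) * q = a - 2) :
    a * ((a - 1) * t ^ (a - 1 - 1) * s)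
      = (a - 1) * a ^ (1 - q) * (s * t ^ a) ^ n * (a * t ^ (a - 1)) ^ q := by
  have hα : a ^ (1 - q) * a ^ q = a := by
    rw [← rpow_add ha, sub_add_cancel, rpow_one]
  have ht_pow : (t ^ a) ^ n * (t ^ (a - 1)) ^ q = t ^ (a - 1 - 1) := by
    rw [← rpow_natCast, ← rpow_mul ht.le, ← rpow_mul ht.le, ← rpow_add ht]
    congr 1
    linear_combination hexp
  rw [mul_pow, hs, mul_rpow ha.le (rpow_nonneg ht.le _)]
  linear_combination -(a - 1) * s * (t ^ (a - 1 - 1) * hα + a ^ (1 - q) * a ^ q * ht_pow)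

/-- the function u(x) = sign(x)·|x|^α with α = (q−2)/(2m+q), q > 2, satisfies
u'' = (α−1)·α^{1−q}·u^{2m+1}·(u')^q away from the origin, equivalently
arctan(u'') = −arctan((1−α)·α^{1−q}·u^{2m+1}·(u')^q). -/
theorem singular_solution_odd_power
    (m : ℕ) (q : ℝ) (hq : 2 < q) (α : ℝ) (hα : α = (q - 2) / (2 * m + q)) :
    α ∈ Set.Ioo (0 : ℝ) 1 ∧
    ∀ x : ℝ, x ≠ 0 →
      HasDerivAt (fun y : ℝ => Real.sign y * |y| ^ α) (α * |x| ^ (α - 1)) x ∧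
      0 < α * |x| ^ (α - 1) ∧
      (∃ d : ℝ, HasDerivAt (fun y : ℝ => α * |y| ^ (α - 1)) d x ∧
        d = (α - 1) * α ^ (1 - q) * (Real.sign x * |x| ^ α) ^ (2 * m + 1) *
          (α * |x| ^ (α - 1)) ^ q ∧
        Real.arctan d =
          - Real.arctan ((1 - α) * α ^ (1 - q) * (Real.sign x * |x| ^ α) ^ (2 * m + 1) *
            (α * |x| ^ (α - 1)) ^ q)) := by
  have hm : (0 : ℝ) ≤ 2 * m := by positivity
  have hα_mem : α ∈ Set.Ioo (0 : ℝ) 1 := hα ▸ singular_exponent_mem_Ioo hm hq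
  have hexp : α * ((2 * m + 1 : ℕ) : ℝ) + (α - 1) * q = α - 2 := by
    push_cast
    exact hα ▸ singular_exponent_relation (by linarith)
  refine ⟨hα_mem, fun x hx ↦ ?_⟩
  have hx_abs : 0 < |x| := abs_pos.mpr hx
  have hd := mul_rpow_sub_two_eq hα_mem.1 hx_abs (sign_pow_of_odd (odd_two_mul_add_one m) x) hexp
  refine ⟨hasDerivAt_sign_mul_abs_rpow α hx, mul_pos hα_mem.1 (rpow_pos_of_pos hx_abs _), _,
    (hasDerivAt_abs_rpow_of_ne_zero (α - 1) hx).const_mul α, hd, ?_⟩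
  rw [hd, ← arctan_neg]
  congr 1
  ring
end

section
/- Let n ≥ 3 be an integer and K > 0. There exists a constant c > 0, depending only on n and K, such that for all real numbers λ₁ ≥ λ₂ ≥ … ≥ λₙ with |λ_j| ≤ K for all j, λₙ < 0, and Σ_{j=1}^n arctan λ_j ≥ (n−2)π/2, one has σ_{n−1}(λ₁,…,λₙ) ≥ c. -/
/-!
Write `θ_j = arccot λ_j ∈ (0, π)`; the angle condition says `∑ θ_j ≤ π`. Since `λ ≤ 0` means
`θ ≥ π / 2`, at most one `λ_i` is nonpositive. If `λ_i < 0`, then `θ_j = arctan λ_j⁻¹` for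
`j ≠ i`, and strict subadditivity of `arctan` on `(0, ∞)` turns `∑_{j ≠ i} θ_j ≤ π - θ_i` into
`∑_j λ_j⁻¹ < 0`; as also `∏_j λ_j < 0`, `σ_{n-1} = ∏_j λ_j · ∑_j λ_j⁻¹ > 0`. So `σ_{n-1}` is
positive on the compact set cut out by `|λ_j| ≤ K` and the angle condition, hence bounded below
there by a positive constant.
-/

open Real

noncomputable section

/-- The k-th elementary symmetric polynomial σ_k(λ₁,…,λₙ), with σ₀ = 1. -/
noncomputable def esymm (n k : ℕ) (lam : Fin n → ℝ) : ℝ :=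
  ∑ s ∈ Finset.powersetCard k (Finset.univ : Finset (Fin n)), ∏ i ∈ s, lam i

open Finset

theorem Finset.powersetCard_card_sub_one {α : Type*} [DecidableEq α] {s : Finset α}
    (hs : s.Nonempty) : s.powersetCard (#s - 1) = s.image s.erase := by
  ext t
  simp only [mem_powersetCard, mem_image]
  constructor
  · rintro ⟨hts, hcard⟩
    obtain ⟨a, ha⟩ : ∃ a, s \ t = {a} := by
      rw [← card_eq_one, card_sdiff_of_subset hts, hcard]
      have := hs.card_pos
      omega
    have has : a ∈ s \ t := ha ▸ mem_singleton_self a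
    refine ⟨a, (mem_sdiff.1 has).1, ?_⟩
    rw [← sdiff_singleton_eq_erase, ← ha, sdiff_sdiff_eq_self hts]
  · rintro ⟨a, ha, rfl⟩
    exact ⟨erase_subset a s, card_erase_of_mem ha⟩

theorem Finset.sum_powersetCard_card_sub_one {α M : Type*} [DecidableEq α] [AddCommMonoid M]
    {s : Finset α} (hs : s.Nonempty) (g : Finset α → M) :
    ∑ t ∈ s.powersetCard (#s - 1), g t = ∑ i ∈ s, g (s.erase i) := by
  rw [powersetCard_card_sub_one hs, sum_image (erase_injOn s)]

theorem esymm_sub_one_eq_sum_prod_erase {n : ℕ} (hn : 0 < n) (lam : Fin n → ℝ) :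
    esymm n (n - 1) lam = ∑ i, ∏ j ∈ univ.erase i, lam j := by
  have : Nonempty (Fin n) := ⟨⟨0, hn⟩⟩
  simpa [esymm] using sum_powersetCard_card_sub_one (univ_nonempty (α := Fin n)) (∏ i ∈ ·, lam i)

theorem Finset.sum_prod_erase_eq_prod_mul_sum_inv {ι K : Type*} [DecidableEq ι] [Field K]
    (s : Finset ι) {f : ι → K} (hf : ∀ i ∈ s, f i ≠ 0) :
    ∑ i ∈ s, ∏ j ∈ s.erase i, f j = (∏ j ∈ s, f j) * ∑ i ∈ s, (f i)⁻¹ := by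
  rw [mul_sum]
  refine sum_congr rfl fun i hi => ?_
  rw [← mul_prod_erase s f hi, mul_comm (f i), mul_assoc, mul_inv_cancel₀ (hf i hi), mul_one]

theorem Real.arctan_add_lt_arctan_add_arctan {a b : ℝ} (ha : 0 < a) (hb : 0 < b) :
    arctan (a + b) < arctan a + arctan b := by
  rcases lt_or_ge (a * b) 1 with hab | hab
  · rw [arctan_add hab, arctan_lt_arctan_iff, lt_div_iff₀ (by linarith)]
    nlinarith [mul_pos (add_pos ha hb) (mul_pos ha hb)]
  · -- then `b ≥ a⁻¹`, and `arctan a + arctan a⁻¹ = π / 2`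
    have : arctan a⁻¹ ≤ arctan b := arctan_le_arctan_iff.2 ((inv_le_iff_one_le_mul₀' ha).2 hab)
    rw [arctan_inv_of_pos ha] at this
    linarith [arctan_lt_pi_div_two (a + b)]

theorem Real.arctan_sum_le_sum_arctan {ι : Type*} [DecidableEq ι] {s : Finset ι} {f : ι → ℝ}
    (hf : ∀ i ∈ s, 0 < f i) : arctan (∑ i ∈ s, f i) ≤ ∑ i ∈ s, arctan (f i) := by
  induction s using Finset.induction_on with
  | empty => simp
  | insert a s ha ih =>
    have hf' : ∀ i ∈ s, 0 < f i := fun i hi => hf i (mem_insert_of_mem hi)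
    rw [sum_insert ha, sum_insert ha]
    rcases s.eq_empty_or_nonempty with rfl | hs
    · simp
    · linarith [arctan_add_lt_arctan_add_arctan (hf a (mem_insert_self a s)) (sum_pos hf' hs),
        ih hf']

theorem Real.arctan_sum_lt_sum_arctan {ι : Type*} [DecidableEq ι] {s : Finset ι} {f : ι → ℝ}
    (hf : ∀ i ∈ s, 0 < f i) (hs : 1 < #s) : arctan (∑ i ∈ s, f i) < ∑ i ∈ s, arctan (f i) := by
  obtain ⟨a, ha⟩ : s.Nonempty := card_pos.1 (by omega)
  have hs' : (s.erase a).Nonempty := card_pos.1 (by rw [card_erase_of_mem ha]; omega)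
  have hf' : ∀ i ∈ s.erase a, 0 < f i := fun i hi => hf i (mem_of_mem_erase hi)
  rw [← add_sum_erase s f ha, ← add_sum_erase s (fun i => arctan (f i)) ha]
  linarith [arctan_add_lt_arctan_add_arctan (hf a ha) (sum_pos hf' hs'),
    arctan_sum_le_sum_arctan hf']

def arccot (x : ℝ) : ℝ := π / 2 - arctan x

theorem arccot_pos (x : ℝ) : 0 < arccot x := sub_pos.2 (arctan_lt_pi_div_two x)

theorem pi_div_two_le_arccot {x : ℝ} (hx : x ≤ 0) : π / 2 ≤ arccot x := by
  have : arctan x ≤ 0 := by simpa using arctan_strictMono.monotone hx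
  unfold arccot; linarith

theorem arccot_of_pos {x : ℝ} (hx : 0 < x) : arccot x = arctan x⁻¹ := (arctan_inv_of_pos hx).symm

theorem arccot_of_neg {x : ℝ} (hx : x < 0) : arccot x = π + arctan x⁻¹ := by
  rw [arctan_inv_of_neg hx, arccot]; ring

theorem sum_arccot_eq_sub_sum_arctan {ι : Type*} [Fintype ι] (f : ι → ℝ) :
    ∑ i, arccot (f i) = Fintype.card ι * (π / 2) - ∑ i, arctan (f i) := by
  simp [arccot, sum_sub_distrib]

section

variable {ι : Type*} [Fintype ι] [DecidableEq ι] {f : ι → ℝ}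

theorem pos_of_sum_arccot_le_pi (hι : 3 ≤ Fintype.card ι) (hsum : ∑ j, arccot (f j) ≤ π)
    {i j : ι} (hi : f i ≤ 0) (hji : j ≠ i) : 0 < f j := by
  by_contra! hj
  have hij : i ∈ univ.erase j := mem_erase.2 ⟨hji.symm, mem_univ i⟩
  have hrest : ((univ.erase j).erase i).Nonempty :=
    card_pos.1 (by rw [card_erase_of_mem hij, card_erase_of_mem (mem_univ j), card_univ]; omega)
  rw [← add_sum_erase _ _ (mem_univ j), ← add_sum_erase _ _ hij] at hsum
  linarith [pi_div_two_le_arccot hi, pi_div_two_le_arccot hj,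
    sum_pos (fun k _ => arccot_pos (f k)) hrest]

theorem sum_inv_neg_of_sum_arccot_le_pi (hι : 3 ≤ Fintype.card ι) (hsum : ∑ j, arccot (f j) ≤ π)
    {i : ι} (hi : f i < 0) (hpos : ∀ j ∈ univ.erase i, 0 < f j) : ∑ j, (f j)⁻¹ < 0 := by
  have hinv : ∀ j ∈ univ.erase i, 0 < (f j)⁻¹ := fun j hj => inv_pos.2 (hpos j hj)
  have hangles : ∑ j ∈ univ.erase i, arctan (f j)⁻¹ ≤ arctan (-(f i)⁻¹) := by
    rw [← add_sum_erase _ _ (mem_univ i), arccot_of_neg hi,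
      sum_congr rfl fun j hj => arccot_of_pos (hpos j hj)] at hsum
    rw [arctan_neg]; linarith
  have : ∑ j ∈ univ.erase i, (f j)⁻¹ < -(f i)⁻¹ := by
    rw [← arctan_lt_arctan_iff]
    refine (arctan_sum_lt_sum_arctan hinv ?_).trans_le hangles
    rw [card_erase_of_mem (mem_univ i), card_univ]; omega
  rw [← add_sum_erase _ _ (mem_univ i)]; linarith

theorem sum_prod_erase_pos_of_sum_arccot_le_pi (hι : 3 ≤ Fintype.card ι)
    (hsum : ∑ j, arccot (f j) ≤ π) : 0 < ∑ i, ∏ j ∈ univ.erase i, f j := by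
  by_cases hall : ∀ i, 0 < f i
  · have : Nonempty ι := Fintype.card_pos_iff.1 (by omega)
    exact sum_pos (fun i _ => prod_pos fun j _ => hall j) univ_nonempty
  obtain ⟨i, hi⟩ : ∃ i, f i ≤ 0 := by simpa using hall
  have hpos : ∀ j ∈ univ.erase i, 0 < f j :=
    fun j hj => pos_of_sum_arccot_le_pi hι hsum hi (ne_of_mem_erase hj)
  rcases hi.lt_or_eq with hneg | hzero
  · have hprod : ∏ j, f j < 0 := by
      rw [← mul_prod_erase _ _ (mem_univ i)]
      exact mul_neg_of_neg_of_pos hneg (prod_pos hpos)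
    rw [sum_prod_erase_eq_prod_mul_sum_inv _ fun j _ => ?_]
    · exact mul_pos_of_neg_of_neg hprod (sum_inv_neg_of_sum_arccot_le_pi hι hsum hneg hpos)
    · rcases eq_or_ne j i with rfl | hji
      · exact hneg.ne
      · exact (hpos j (mem_erase.2 ⟨hji, mem_univ j⟩)).ne'
  · rw [sum_eq_single_of_mem i (mem_univ i) fun j _ hji =>
      prod_eq_zero (mem_erase.2 ⟨hji.symm, mem_univ i⟩) hzero]
    exact prod_pos hpos

end

theorem IsCompact.exists_pos_le_of_pos {X : Type*} [TopologicalSpace X] {S : Set X}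
    {f : X → ℝ} (hS : IsCompact S) (hf : ContinuousOn f S) (hpos : ∀ x ∈ S, 0 < f x) :
    ∃ c, 0 < c ∧ ∀ x ∈ S, c ≤ f x := by
  rcases S.eq_empty_or_nonempty with rfl | hne
  · exact ⟨1, one_pos, by simp⟩
  obtain ⟨x₀, hx₀, hmin⟩ := hS.exists_isMinOn hne hf
  exact ⟨f x₀, hpos x₀ hx₀, hmin⟩

theorem continuous_esymm (n k : ℕ) : Continuous (esymm n k) := by
  unfold esymm; fun_prop

/-- uniform positive lower bound on σ_{n−1} for ordered λ with |λⱼ| ≤ K,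
λₙ < 0, and ∑ arctan λⱼ ≥ (n−2)π/2. Here `lam i` is λ_{i+1} (0-indexed). -/
theorem sigma_n_minus_one_lower_bound
    (n : ℕ) (hn : 3 ≤ n) (K : ℝ) :
    ∃ c : ℝ, 0 < c ∧
      ∀ lam : Fin n → ℝ,
        (∀ i j : Fin n, i ≤ j → lam j ≤ lam i) →
        (∀ j, |lam j| ≤ K) →
        lam ⟨n - 1, by omega⟩ < 0 →
        ((n : ℝ) - 2) * Real.pi / 2 ≤ ∑ j, Real.arctan (lam j) →
        c ≤ esymm n (n - 1) lam := by
  let S : Set (Fin n → ℝ) :=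
    Set.univ.pi (fun _ => Set.Icc (-K) K) ∩ {lam | ((n : ℝ) - 2) * π / 2 ≤ ∑ j, arctan (lam j)}
  have hS : IsCompact S := (isCompact_univ_pi fun _ => isCompact_Icc).inter_right
    (isClosed_le continuous_const (by fun_prop))
  have hpos : ∀ lam ∈ S, 0 < esymm n (n - 1) lam := by
    rintro lam ⟨-, hsum⟩
    rw [esymm_sub_one_eq_sum_prod_erase (by omega)]
    refine sum_prod_erase_pos_of_sum_arccot_le_pi (by simpa using hn) ?_
    rw [sum_arccot_eq_sub_sum_arctan, Fintype.card_fin]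
    linarith [hsum.out]
  obtain ⟨c, hc, hle⟩ := hS.exists_pos_le_of_pos (continuous_esymm n _).continuousOn hpos
  exact ⟨c, hc, fun lam _ habs _ hsum => hle lam ⟨fun j _ => abs_le.1 (habs j), hsum⟩⟩
end
end
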